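/- arXiv:1209.3508 — 2 statements merged into one kernel-verified Lean document; each statement's English description precedes it below -/
import Mathlib

section
/- Let A be a unital C*-algebra, B a unital C*-subalgebra containing the unit, E : A → B a conditional expectation, x ∈ A strictly positive, and y ∈ A selfadjoint. Let b ∈ B satisfy that Im(bx) is strictly positive, and let w ∈ B have Im w strictly positive. Then h_y(w) is well defined (all required inverses exist), and if moreover h_y(w) is invertible, then h_y(w)·b and all elements required to form g_b(w) := b·h_x(h_y(w)·b) are invertible, and Im( b·h_x(h_y(w)·b) ) ≥ E[(Im(bx))^{-1}]^{-1}, which is strictly positive. In particular the map g_b sends the operator upper half-plane of B strictly into itself. -/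
/-!
Inversion maps the operator upper half-plane to the lower one, `Im v⁻¹ = -v⁻¹ (Im v) v⁻¹*`, an
element with strictly positive imaginary part is invertible, and `E` commutes with `Im` and
preserves strict positivity; this makes every inverse in `h_y(w)` and `g_b(w)` exist.

The lower bound rests on two Schwarz inequalities for `E`, obtained by applying `E` to
`(a - c) k (a - c)* ≥ 0`:
`E(a) t E(a)* ≤ E(a t a*)` for `0 ≤ t ∈ B` (take `c = E a`), and
`E(a) E(k⁻¹)⁻¹ E(a)* ≤ E(a k a*)` for `k > 0` (take `c = E(a) E(k⁻¹)⁻¹ k⁻¹`).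
With `q = (v⁻¹ - z)⁻¹` we have `Im q = q (Im z - Im v⁻¹) q*` and
`Im h_z(v) = Im v⁻¹ + E(q)⁻¹ E(Im q) E(q)⁻¹*`; the first inequality absorbs the term
`-Im v⁻¹ ≥ 0`, leaving `Im h_z(v) ≥ E(q)⁻¹ E(q (Im z) q*) E(q)⁻¹*`.
For `z = y` this gives `Im h_y(w) ≥ 0`. Since `b h_x(h b) = h_{bx}(h)`, the second inequality
with `k = Im(bx)` then bounds `Im g_b(w)` below by `E[(Im(bx))⁻¹]⁻¹`.
-/

noncomputable section

/-- The imaginary part `Im a = (a - a*)/(2i)` of an element of a complex star algebra. -/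
def aIm {A : Type*} [NonUnitalRing A] [StarRing A] [Module ℂ A] (a : A) : A :=
  ((2 * Complex.I)⁻¹ : ℂ) • (a - star a)

/-- `k > 0`: `k` is selfadjoint, nonnegative and invertible. -/
def StrictlyPos {A : Type*} [Ring A] [StarRing A] [PartialOrder A] (k : A) : Prop :=
  IsSelfAdjoint k ∧ 0 ≤ k ∧ IsUnit k

/-- The h transform `h_z(v) = v⁻¹ - E[(v⁻¹ - z)⁻¹]⁻¹`. -/
def hT {A : Type*} [Ring A] [Module ℂ A] (E : A →ₗ[ℂ] A) (z v : A) : A :=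
  Ring.inverse v - Ring.inverse (E (Ring.inverse (Ring.inverse v - z)))

open scoped Ring ComplexStarModule

section ImaginaryPart

variable {A : Type*} [CStarAlgebra A]

lemma aIm_eq_imaginaryPart (a : A) : aIm a = ℑ a := by
  rw [aIm, imaginaryPart_apply_coe, ← Complex.coe_smul, smul_smul]
  congr 1
  field_simp
  simp

lemma aIm_neg (a : A) : aIm (-a) = -aIm a := by
  simp only [aIm_eq_imaginaryPart, map_neg, NegMemClass.coe_neg]

lemma aIm_sub (a b : A) : aIm (a - b) = aIm a - aIm b := by
  simp only [aIm_eq_imaginaryPart, map_sub, AddSubgroupClass.coe_sub]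

lemma IsSelfAdjoint.aIm_eq_zero {a : A} (ha : IsSelfAdjoint a) : aIm a = 0 := by
  rw [aIm_eq_imaginaryPart, ha.imaginaryPart, ZeroMemClass.coe_zero]

lemma aIm_ringInverse {v : A} (hv : IsUnit v) :
    aIm v⁻¹ʳ = -(v⁻¹ʳ * aIm v * star v⁻¹ʳ) := by
  have key : v⁻¹ʳ * (v - star v) * star v⁻¹ʳ = star v⁻¹ʳ - v⁻¹ʳ := by
    rw [mul_sub, sub_mul, Ring.inverse_mul_cancel v hv, one_mul, mul_assoc, ← star_mul,
      Ring.inverse_mul_cancel v hv, star_one, mul_one]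
  rw [aIm, aIm, mul_smul_comm, smul_mul_assoc, key, ← smul_neg, neg_sub]

lemma isUnit_add_I_smul_one {c : A} (hc : IsSelfAdjoint c) : IsUnit (c + Complex.I • 1) := by
  have hI : Complex.I ∉ spectrum ℂ (-c) := fun h => by
    simpa [Complex.ext_iff] using hc.neg.mem_spectrum_eq_re h
  rwa [spectrum.mem_iff, not_not, Algebra.algebraMap_eq_smul_one, sub_neg_eq_add, add_comm] at hI

variable [PartialOrder A] [StarOrderedRing A]

lemma strictlyPos_iff_isStrictlyPositive {k : A} : StrictlyPos k ↔ IsStrictlyPositive k :=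
  ⟨fun h => ⟨h.2.1, h.2.2⟩, fun h => ⟨h.isSelfAdjoint, h.nonneg, h.isUnit⟩⟩

lemma isUnit_of_isStrictlyPositive_aIm {v : A} (hv : IsStrictlyPositive (aIm v)) : IsUnit v := by
  set s := CFC.sqrt (aIm v)
  have hs : IsStrictlyPositive s := hv.sqrt
  have hs_inv : IsSelfAdjoint s⁻¹ʳ := hs.isSelfAdjoint.ringInverse
  set c := s⁻¹ʳ * ℜ v * s⁻¹ʳ
  have hc : IsSelfAdjoint c := (ℜ v).prop.conjugate_self hs_inv
  have hv_eq : v = s * (c + Complex.I • 1) * s := by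
    rw [mul_add, add_mul, mul_smul_comm, smul_mul_assoc, mul_one,
      CFC.sqrt_mul_sqrt_self _ hv.nonneg, aIm_eq_imaginaryPart, ← mul_assoc, ← mul_assoc,
      Ring.mul_inverse_cancel _ hs.isUnit, one_mul, mul_assoc, Ring.inverse_mul_cancel _ hs.isUnit,
      mul_one, realPart_add_I_smul_imaginaryPart]
  rw [hv_eq]
  exact (hs.isUnit.mul (isUnit_add_I_smul_one hc)).mul hs.isUnit

end ImaginaryPart

lemma aIm_mem {A : Type*} [CStarAlgebra A] {B : StarSubalgebra ℂ A} {a : A} (ha : a ∈ B) :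
    aIm a ∈ B :=
  B.smul_mem (sub_mem ha (star_mem ha)) _

section UpperHalfPlane

variable {A : Type*} [CStarAlgebra A] [PartialOrder A] [StarOrderedRing A]

lemma le_inverse_conj_of_conj_le {u a b : A} (hu : IsUnit u) (h : u * a * star u ≤ b) :
    a ≤ u⁻¹ʳ * b * star u⁻¹ʳ := by
  have h' := star_right_conjugate_le_conjugate h u⁻¹ʳ
  rwa [show u⁻¹ʳ * (u * a * star u) * star u⁻¹ʳ = (u⁻¹ʳ * u) * a * star (u⁻¹ʳ * u) by
    rw [star_mul]; noncomm_ring, Ring.inverse_mul_cancel u hu, star_one, one_mul, mul_one] at h'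

lemma aIm_ringInverse_nonpos {v : A} (hv : IsUnit v) (h : 0 ≤ aIm v) : aIm v⁻¹ʳ ≤ 0 := by
  rw [aIm_ringInverse hv, neg_nonpos]
  exact star_right_conjugate_nonneg h _

lemma isStrictlyPositive_neg_aIm_ringInverse {v : A} (hv : IsStrictlyPositive (aIm v)) :
    IsStrictlyPositive (-aIm v⁻¹ʳ) := by
  have hvU := isUnit_of_isStrictlyPositive_aIm hv
  rwa [aIm_ringInverse hvU, neg_neg, hvU.ringInverse.isStrictlyPositive_star_right_conjugate_iff]

lemma isUnit_of_isStrictlyPositive_neg_aIm {v : A} (hv : IsStrictlyPositive (-aIm v)) :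
    IsUnit v := by
  simpa using (isUnit_of_isStrictlyPositive_aIm (v := -v) (by rwa [aIm_neg])).neg

lemma isStrictlyPositive_aIm_ringInverse {v : A} (hv : IsStrictlyPositive (-aIm v)) :
    IsStrictlyPositive (aIm v⁻¹ʳ) := by
  have hvU := isUnit_of_isStrictlyPositive_neg_aIm hv
  rwa [aIm_ringInverse hvU, ← neg_mul, ← mul_neg,
    hvU.ringInverse.isStrictlyPositive_star_right_conjugate_iff]

end UpperHalfPlane

lemma ringInverse_mul_sub {R : Type*} [Ring R] {h b : R} (hb : IsUnit b) (x : R) :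
    (h * b)⁻¹ʳ - x = b⁻¹ʳ * (h⁻¹ʳ - b * x) := by
  rw [Ring.inverse_mul (.inr hb), mul_sub, Ring.inverse_mul_cancel_left _ _ hb]

lemma ringInverse_ringInverse_mul_sub {R : Type*} [Ring R] {h b : R} (hb : IsUnit b)
    (x : R) : ((h * b)⁻¹ʳ - x)⁻¹ʳ = (h⁻¹ʳ - b * x)⁻¹ʳ * b := by
  rw [ringInverse_mul_sub hb, Ring.inverse_mul (.inl hb.ringInverse), Ring.inverse_inverse hb]

lemma StarSubalgebra.ringInverse_mem {A : Type*} [CStarAlgebra A] {B : StarSubalgebra ℂ A}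
    (hB : IsClosed (B : Set A)) {a : A} (ha : a ∈ B) : a⁻¹ʳ ∈ B := by
  by_cases hu : IsUnit a
  · obtain ⟨u, hu⟩ := (StarSubalgebra.coe_isUnit B (hS := hB) (a := ⟨a, ha⟩)).mp hu
    have : a = (Units.map B.subtype.toMonoidHom u : A) := by simp [hu]
    rw [this, Ring.inverse_unit, ← map_inv]
    exact (u⁻¹ : Bˣ).val.prop
  · rw [Ring.inverse_non_unit a hu]
    exact zero_mem B

structure IsConditionalExpectation {A : Type*} [CStarAlgebra A] [PartialOrder A]
    (B : StarSubalgebra ℂ A) (E : A →ₗ[ℂ] A) : Prop where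
  mem : ∀ a, E a ∈ B
  map_one : E 1 = 1
  map_nonneg : ∀ a, 0 ≤ a → 0 ≤ E a
  map_mul_mul : ∀ b₁ ∈ B, ∀ b₂ ∈ B, ∀ a, E (b₁ * a * b₂) = b₁ * E a * b₂

namespace IsConditionalExpectation

variable {A : Type*} [CStarAlgebra A] [PartialOrder A] {B : StarSubalgebra ℂ A} {E : A →ₗ[ℂ] A}

lemma map_mul_right (hE : IsConditionalExpectation B E) {b : A} (hb : b ∈ B) (a : A) :
    E (a * b) = E a * b := by
  simpa using hE.map_mul_mul 1 (one_mem B) b hb a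

lemma map_mul_left (hE : IsConditionalExpectation B E) {b : A} (hb : b ∈ B) (a : A) :
    E (b * a) = b * E a := by
  simpa using hE.map_mul_mul b hb 1 (one_mem B) a

lemma map_of_mem (hE : IsConditionalExpectation B E) {b : A} (hb : b ∈ B) : E b = b := by
  simpa [hE.map_one] using hE.map_mul_left hb 1

lemma mul_hT_mul (hE : IsConditionalExpectation B E) {b : A} (hbB : b ∈ B) (hb : IsUnit b)
    (h x : A) : b * hT E x (h * b) = hT E (b * x) h := by
  rw [hT, hT, ringInverse_ringInverse_mul_sub hb, hE.map_mul_right hbB,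
    Ring.inverse_mul (.inr hb), Ring.inverse_mul (.inr hb), mul_sub,
    Ring.mul_inverse_cancel_left _ _ hb, Ring.mul_inverse_cancel_left _ _ hb]

variable [StarOrderedRing A]

lemma mono (hE : IsConditionalExpectation B E) {a₁ a₂ : A} (h : a₁ ≤ a₂) : E a₁ ≤ E a₂ :=
  sub_nonneg.mp (map_sub E a₂ a₁ ▸ hE.map_nonneg _ (sub_nonneg.mpr h))

lemma isSelfAdjoint_map (hE : IsConditionalExpectation B E) {a : A} (ha : IsSelfAdjoint a) :
    IsSelfAdjoint (E a) := by
  rw [← CFC.posPart_sub_negPart a ha, map_sub]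
  exact (hE.map_nonneg _ (CFC.posPart_nonneg a)).isSelfAdjoint.sub
    (hE.map_nonneg _ (CFC.negPart_nonneg a)).isSelfAdjoint

lemma map_star (hE : IsConditionalExpectation B E) (a : A) : E (star a) = star (E a) := by
  have hre := hE.isSelfAdjoint_map (ℜ a).prop
  have him := hE.isSelfAdjoint_map (ℑ a).prop
  conv_lhs => rw [← realPart_add_I_smul_imaginaryPart a]
  conv_rhs => rw [← realPart_add_I_smul_imaginaryPart a]
  rw [star_add, star_smul, (ℜ a).prop.star_eq, (ℑ a).prop.star_eq, map_add, map_smul, map_add,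
    map_smul, star_add, star_smul, hre.star_eq, him.star_eq]

lemma map_aIm (hE : IsConditionalExpectation B E) (a : A) : E (aIm a) = aIm (E a) := by
  rw [aIm, map_smul, map_sub, hE.map_star, aIm]

lemma isStrictlyPositive_map (hE : IsConditionalExpectation B E) {k : A}
    (hk : IsStrictlyPositive k) : IsStrictlyPositive (E k) := by
  nontriviality A
  obtain ⟨r, hr, hrk⟩ := (CFC.exists_pos_algebraMap_le_iff hk.isSelfAdjoint).2
    fun x hx => hk.spectrum_pos hx
  have hrB : algebraMap ℝ A r ∈ B := by
    rw [IsScalarTower.algebraMap_apply ℝ ℂ A]; exact B.algebraMap_mem _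
  exact (isStrictlyPositive_algebraMap hr).of_le (hE.map_of_mem hrB ▸ hE.mono hrk)

lemma conj_le_map_conj_of_mem (hE : IsConditionalExpectation B E) {t : A} (htB : t ∈ B)
    (ht : 0 ≤ t) (a : A) : E a * t * star (E a) ≤ E (a * t * star a) := by
  have hEaB := hE.mem a
  have h0 := hE.map_nonneg _ (star_right_conjugate_nonneg ht (a - E a))
  rw [star_sub, show (a - E a) * t * (star a - star (E a)) = a * t * star a
      - a * (t * star (E a)) - (E a * t) * star a + E a * t * star (E a) by noncomm_ring,
    map_add, map_sub, map_sub, hE.map_mul_right (mul_mem htB (star_mem hEaB)),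
    hE.map_mul_left (mul_mem hEaB htB), hE.map_star,
    hE.map_of_mem (mul_mem (mul_mem hEaB htB) (star_mem hEaB))] at h0
  exact sub_nonneg.mp (by convert h0 using 1; noncomm_ring)

lemma conj_inverse_le_map_conj (hE : IsConditionalExpectation B E) (hB : IsClosed (B : Set A))
    {k : A} (hk : IsStrictlyPositive k) (a : A) :
    E a * (E k⁻¹ʳ)⁻¹ʳ * star (E a) ≤ E (a * k * star a) := by
  have hEk : IsStrictlyPositive (E k⁻¹ʳ) := hE.isStrictlyPositive_map hk.ringInverse
  set X := (E k⁻¹ʳ)⁻¹ʳ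
  set r := E a * X
  have hrB : r ∈ B := mul_mem (hE.mem a) (B.ringInverse_mem hB (hE.mem _))
  have hr_star : star r = X * star (E a) := by
    rw [star_mul, hEk.ringInverse.isSelfAdjoint.star_eq]
  have hkk : k * k⁻¹ʳ = 1 := Ring.mul_inverse_cancel k hk.isUnit
  have hkk' : k⁻¹ʳ * k = 1 := Ring.inverse_mul_cancel k hk.isUnit
  have h0 := hE.map_nonneg _ (star_right_conjugate_nonneg hk.nonneg (a - r * k⁻¹ʳ))
  rw [star_sub, star_mul, hk.ringInverse.isSelfAdjoint.star_eq,
    show (a - r * k⁻¹ʳ) * k * (star a - k⁻¹ʳ * star r) = a * k * star a - a * (k * k⁻¹ʳ) * star r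
      - r * (k⁻¹ʳ * k) * star a + r * (k⁻¹ʳ * k) * k⁻¹ʳ * star r by noncomm_ring,
    hkk, hkk', mul_one, mul_one, map_add, map_sub, map_sub,
    hE.map_mul_right (star_mem hrB), hE.map_mul_left hrB, hE.map_mul_mul r hrB _ (star_mem hrB),
    hE.map_star, hr_star, ← mul_assoc, mul_assoc (E a) X (E k⁻¹ʳ),
    Ring.inverse_mul_cancel _ hEk.isUnit, mul_one] at h0
  exact sub_nonneg.mp (by convert h0 using 1; noncomm_ring)
lemma conj_le_aIm_hT (hE : IsConditionalExpectation B E) (hB : IsClosed (B : Set A)) {v z : A}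
    (hvB : v ∈ B) (hv : IsUnit v) (hIm : 0 ≤ aIm v)
    (hpos : IsStrictlyPositive (aIm z - aIm v⁻¹ʳ)) :
    IsUnit (v⁻¹ʳ - z) ∧ IsUnit (E (v⁻¹ʳ - z)⁻¹ʳ) ∧
      (E (v⁻¹ʳ - z)⁻¹ʳ)⁻¹ʳ * E ((v⁻¹ʳ - z)⁻¹ʳ * aIm z * star (v⁻¹ʳ - z)⁻¹ʳ) *
        star (E (v⁻¹ʳ - z)⁻¹ʳ)⁻¹ʳ ≤ aIm (hT E z v) := by
  have hm : IsStrictlyPositive (-aIm (v⁻¹ʳ - z)) := by rwa [aIm_sub, neg_sub]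
  have hmU := isUnit_of_isStrictlyPositive_neg_aIm hm
  have hq := isStrictlyPositive_aIm_ringInverse hm
  set q := (v⁻¹ʳ - z)⁻¹ʳ
  have hEq := hE.isStrictlyPositive_map hq
  rw [hE.map_aIm] at hEq
  have hEqU := isUnit_of_isStrictlyPositive_aIm hEq
  refine ⟨hmU, hEqU, ?_⟩
  have ht : 0 ≤ -aIm v⁻¹ʳ := neg_nonneg.mpr (aIm_ringInverse_nonpos hv hIm)
  have htB : -aIm v⁻¹ʳ ∈ B := neg_mem (aIm_mem (B.ringInverse_mem hB hvB))
  have hImq : aIm q = q * -aIm v⁻¹ʳ * star q + q * aIm z * star q := by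
    rw [aIm_ringInverse hmU, aIm_sub, mul_sub, sub_mul, neg_sub, sub_eq_neg_add, mul_neg, neg_mul]
  have hImh : aIm (hT E z v) = aIm v⁻¹ʳ + (E q)⁻¹ʳ * E (aIm q) * star (E q)⁻¹ʳ := by
    rw [hT, aIm_sub, aIm_ringInverse hEqU, hE.map_aIm, sub_neg_eq_add]
  have hSchwarz := le_inverse_conj_of_conj_le hEqU (hE.conj_le_map_conj_of_mem htB ht q)
  rw [hImh, hImq, map_add, mul_add, add_mul, ← sub_le_iff_le_add', sub_eq_neg_add,
    add_le_add_iff_right]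
  exact hSchwarz

end IsConditionalExpectation

/-- For a conditional expectation `E` onto a C*-subalgebra `B`, `x > 0`, `y = y*`,
`b ∈ B` with `Im(bx) > 0` and `w ∈ B` with `Im w > 0`: `h_y(w)` is well defined, and if
`h_y(w)` is invertible then all elements needed to form `g_b(w) = b h_x(h_y(w) b)` are
invertible and `Im (b h_x(h_y(w) b)) ≥ E[(Im(bx))⁻¹]⁻¹ > 0`. -/
theorem stmt_4 {A : Type*} [CStarAlgebra A] [PartialOrder A] [StarOrderedRing A]
    (B : StarSubalgebra ℂ A) (hBclosed : IsClosed (B : Set A))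
    (E : A →ₗ[ℂ] A) (hErange : ∀ a : A, E a ∈ B)
    (hE1 : E 1 = 1) (hEpos : ∀ a : A, 0 ≤ a → 0 ≤ E a)
    (hEbimod : ∀ b₁ ∈ B, ∀ b₂ ∈ B, ∀ a : A, E (b₁ * a * b₂) = b₁ * E a * b₂)
    (x y : A) (hx : StrictlyPos x) (hy : IsSelfAdjoint y)
    (b : A) (hbB : b ∈ B) (hbx : StrictlyPos (aIm (b * x)))
    (w : A) (hwB : w ∈ B) (hw : StrictlyPos (aIm w)) :
    (IsUnit w ∧ IsUnit (Ring.inverse w - y) ∧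
      IsUnit (E (Ring.inverse (Ring.inverse w - y)))) ∧
    (IsUnit (hT E y w) →
      IsUnit (hT E y w * b) ∧
      IsUnit (Ring.inverse (hT E y w * b) - x) ∧
      IsUnit (E (Ring.inverse (Ring.inverse (hT E y w * b) - x))) ∧
      StrictlyPos (Ring.inverse (E (Ring.inverse (aIm (b * x))))) ∧
      Ring.inverse (E (Ring.inverse (aIm (b * x)))) ≤
        aIm (b * hT E x (hT E y w * b))) := by
  have hE : IsConditionalExpectation B E := ⟨hErange, hE1, hEpos, hEbimod⟩
  rw [strictlyPos_iff_isStrictlyPositive] at hx hbx hw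
  have hwU := isUnit_of_isStrictlyPositive_aIm hw
  obtain ⟨hwy, hEwy, hIm_h⟩ := hE.conj_le_aIm_hT hBclosed hwB hwU hw.nonneg
    (by rw [hy.aIm_eq_zero, zero_sub]; exact isStrictlyPositive_neg_aIm_ringInverse hw)
  rw [hy.aIm_eq_zero, mul_zero, zero_mul, map_zero, mul_zero, zero_mul] at hIm_h
  refine ⟨⟨hwU, hwy, hEwy⟩, fun hh => ?_⟩
  have hbU : IsUnit b := hx.isUnit.mul_right_iff.mp (isUnit_of_isStrictlyPositive_aIm hbx)
  have hhB : hT E y w ∈ B :=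
    sub_mem (B.ringInverse_mem hBclosed hwB) (B.ringInverse_mem hBclosed (hE.mem _))
  obtain ⟨hm, hEm, hle⟩ := hE.conj_le_aIm_hT hBclosed hhB hh hIm_h
    (by rw [sub_eq_add_neg]
        exact hbx.add_nonneg (neg_nonneg.mpr (aIm_ringInverse_nonpos hh hIm_h)))
  refine ⟨hh.mul hbU, ?_, ?_, strictlyPos_iff_isStrictlyPositive.mpr
    (hE.isStrictlyPositive_map hbx.ringInverse).ringInverse, ?_⟩
  · rw [ringInverse_mul_sub hbU]
    exact hbU.ringInverse.mul hm
  · rw [ringInverse_ringInverse_mul_sub hbU, hE.map_mul_right hbB]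
    exact hEm.mul hbU
  · rw [hE.mul_hT_mul hbB hbU]
    exact (le_inverse_conj_of_conj_le hEm (hE.conj_inverse_le_map_conj hBclosed hbx _)).trans hle
end
end

section
/- Let A be a unital C*-algebra, B a unital C*-subalgebra, E : A → B a unital positive linear map, and x ∈ A selfadjoint. For every b ∈ A with Im b strictly positive: b − x is invertible and −Im(E[(b − x)^{-1}]) is strictly positive; that is, the operator-valued Cauchy transform G_x(b) := E[(b − x)^{-1}] maps the operator upper half-plane ℍ⁺ into the operator lower half-plane ℍ⁻ := −ℍ⁺. -/
/-!
Write `b - x = h + i k` with `h` selfadjoint and `k = Im b > 0`. The identities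
`(h ∓ i k) k⁻¹ (h ± i k) = h k⁻¹ h + k ≥ k` give `b - x` a left and a right inverse.
For a unit `c`, `Im (c⁻¹) = -c⁻¹ (Im c) (c⁻¹)*` is a conjugate of `-Im c` by a unit, so
`-Im (c⁻¹) > 0`. A positive map commutes with `*` (split selfadjoints into positive and negative
parts) and hence with `Im`, and a unital one preserves strict positivity because `p > 0` implies
`p ≥ r • 1` for some real `r > 0`.
-/

noncomputable section

open Complex ComplexStarModule

lemma aIm_eq_imaginaryPart_s14 {A : Type*} [NonUnitalRing A] [StarRing A] [Module ℂ A]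
    [StarModule ℂ A] (a : A) : aIm a = ℑ a := by
  rw [aIm, imaginaryPart_apply_coe, ← Complex.coe_smul, smul_smul]
  congr 1
  field_simp
  simp

lemma strictlyPos_iff_isStrictlyPositive_s14 {A : Type*} [Ring A] [StarRing A] [PartialOrder A]
    [StarOrderedRing A] {a : A} : StrictlyPos a ↔ IsStrictlyPositive a :=
  ⟨fun ⟨_, h0, hu⟩ => hu.isStrictlyPositive h0, fun h => ⟨h.isSelfAdjoint, h.nonneg, h.isUnit⟩⟩

theorem isUnit_of_isUnit_mul_of_isUnit_mul {M : Type*} [Monoid M] {a b c : M}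
    (hab : IsUnit (a * b)) (hbc : IsUnit (b * c)) : IsUnit b := by
  obtain ⟨u, hu⟩ := hab
  obtain ⟨v, hv⟩ := hbc
  have hl : (↑u⁻¹ * a) * b = 1 := by rw [mul_assoc, ← hu, Units.inv_mul]
  have hr : b * (c * ↑v⁻¹) = 1 := by rw [← mul_assoc, ← hv, Units.mul_inv]
  exact isUnit_iff_exists.mpr ⟨_, hr, left_inv_eq_right_inv hl hr ▸ hl⟩

section Algebra

variable {A : Type*} [Ring A] [Algebra ℂ A]

theorem sub_I_smul_mul_inv_mul_add_I_smul (h : A) (u : Aˣ) :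
    (h - I • (u : A)) * ↑u⁻¹ * (h + I • (u : A)) = h * ↑u⁻¹ * h + u := by
  simp only [sub_mul, mul_add, smul_mul_assoc, mul_smul_comm, mul_assoc, Units.inv_mul,
    Units.mul_inv_cancel_left, mul_one, smul_sub, smul_smul, I_mul_I]
  module

theorem add_I_smul_mul_inv_mul_sub_I_smul (h : A) (u : Aˣ) :
    (h + I • (u : A)) * ↑u⁻¹ * (h - I • (u : A)) = h * ↑u⁻¹ * h + u := by
  simp only [add_mul, mul_sub, smul_mul_assoc, mul_smul_comm, mul_assoc, Units.inv_mul,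
    Units.mul_inv_cancel_left, mul_one, smul_add, smul_smul, I_mul_I]
  module

theorem imaginaryPart_inv [StarRing A] [StarModule ℂ A] (u : Aˣ) :
    (ℑ (↑u⁻¹ : A) : A) = -(↑u⁻¹ * ℑ (u : A) * star (↑u⁻¹ : A)) := by
  have key : (↑u⁻¹ : A) - star ↑u⁻¹ = -(↑u⁻¹ * ((u : A) - star ↑u) * star ↑u⁻¹) := by
    rw [mul_sub, sub_mul, Units.inv_mul, one_mul, mul_assoc, ← star_mul, Units.inv_mul,
      star_one, mul_one, neg_sub]
  rw [imaginaryPart_apply_coe, imaginaryPart_apply_coe, key]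
  simp only [smul_neg, mul_smul_comm, smul_mul_assoc]

end Algebra

section CStarAlgebra

variable {A : Type*} [CStarAlgebra A] [PartialOrder A] [StarOrderedRing A]

theorem IsSelfAdjoint.isUnit_add_I_smul {h k : A} (hh : IsSelfAdjoint h)
    (hk : IsStrictlyPositive k) : IsUnit (h + I • k) := by
  lift k to Aˣ using hk.isUnit
  have hconj : 0 ≤ h * ↑k⁻¹ * h := by
    simpa [hh.star_eq] using star_left_conjugate_nonneg (CFC.inv_nonneg_of_nonneg k hk.nonneg) h
  have hpos : IsStrictlyPositive (h * ↑k⁻¹ * h + k) := hk.nonneg_add hconj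
  refine isUnit_of_isUnit_mul_of_isUnit_mul (a := (h - I • (k : A)) * ↑k⁻¹)
    (c := ↑k⁻¹ * (h - I • (k : A))) ?_ ?_
  · rw [sub_I_smul_mul_inv_mul_add_I_smul]
    exact hpos.isUnit
  · rw [← mul_assoc, add_I_smul_mul_inv_mul_sub_I_smul]
    exact hpos.isUnit

theorem isUnit_of_isStrictlyPositive_imaginaryPart {c : A}
    (hc : IsStrictlyPositive (ℑ c : A)) : IsUnit c := by
  simpa only [realPart_add_I_smul_imaginaryPart] using (ℜ c).2.isUnit_add_I_smul hc

theorem isStrictlyPositive_neg_imaginaryPart_ringInverse {c : A}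
    (hc : IsStrictlyPositive (ℑ c : A)) : IsStrictlyPositive (-(ℑ (Ring.inverse c) : A)) := by
  obtain ⟨u, rfl⟩ := isUnit_of_isStrictlyPositive_imaginaryPart hc
  rw [Ring.inverse_unit, imaginaryPart_inv, neg_neg]
  exact u⁻¹.isUnit.isStrictlyPositive_star_right_conjugate_iff.mpr hc

end CStarAlgebra

namespace PositiveLinearMap

variable {A B : Type*} [CStarAlgebra A] [PartialOrder A] [StarOrderedRing A]
  [CStarAlgebra B] [PartialOrder B] [StarOrderedRing B]

lemma map_isSelfAdjoint (f : A →ₚ[ℂ] B) {a : A} (ha : IsSelfAdjoint a) :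
    IsSelfAdjoint (f a) := by
  rw [← CFC.posPart_sub_negPart a ha, map_sub]
  exact (f.map_nonneg (CFC.posPart_nonneg a)).isSelfAdjoint.sub
    (f.map_nonneg (CFC.negPart_nonneg a)).isSelfAdjoint

lemma map_star (f : A →ₚ[ℂ] B) (a : A) : f (star a) = star (f a) := by
  have hre := f.map_isSelfAdjoint (ℜ a).2
  have him := f.map_isSelfAdjoint (ℑ a).2
  rw [← realPart_add_I_smul_imaginaryPart a]
  simp [hre.star_eq, him.star_eq, (ℜ a).2.star_eq, (ℑ a).2.star_eq]

lemma map_imaginaryPart (f : A →ₚ[ℂ] B) (a : A) : f (ℑ a) = ℑ (f a) := by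
  simp [imaginaryPart_apply_coe, f.map_star]

lemma map_isStrictlyPositive (f : A →ₚ[ℂ] B) (hf : IsStrictlyPositive (f 1)) {a : A}
    (ha : IsStrictlyPositive a) : IsStrictlyPositive (f a) := by
  rcases subsingleton_or_nontrivial A with _ | _
  · rwa [Subsingleton.elim a 1]
  obtain ⟨r, hr, hra⟩ :=
    (CFC.exists_pos_algebraMap_le_iff ha.isSelfAdjoint).2 fun x hx => ha.spectrum_pos hx
  refine (hf.smul hr).of_le ?_
  rw [← map_smul_of_tower, ← Algebra.algebraMap_eq_smul_one]
  exact f.monotone' hra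

end PositiveLinearMap

theorem stmt_14_general {A : Type*} [CStarAlgebra A] [PartialOrder A] [StarOrderedRing A]
    (E : A →ₗ[ℂ] A)
    (hE1 : E 1 = 1) (hEpos : ∀ a : A, 0 ≤ a → 0 ≤ E a)
    (x : A) (hx : IsSelfAdjoint x) :
    ∀ b : A, StrictlyPos (aIm b) →
      IsUnit (b - x) ∧ StrictlyPos (-(aIm (E (Ring.inverse (b - x))))) := by
  let f : A →ₚ[ℂ] A := .mk₀ E hEpos
  have hf1 : IsStrictlyPositive (f 1) := by
    change IsStrictlyPositive (E 1)
    rw [hE1]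
    exact isStrictlyPositive_one
  intro b hb
  rw [strictlyPos_iff_isStrictlyPositive_s14, aIm_eq_imaginaryPart_s14] at hb
  have hc : IsStrictlyPositive (ℑ (b - x) : A) := by
    rwa [map_sub, hx.imaginaryPart, sub_zero]
  refine ⟨isUnit_of_isStrictlyPositive_imaginaryPart hc, ?_⟩
  have hG := f.map_isStrictlyPositive hf1 (isStrictlyPositive_neg_imaginaryPart_ringInverse hc)
  rwa [map_neg, f.map_imaginaryPart, ← aIm_eq_imaginaryPart_s14,
    ← strictlyPos_iff_isStrictlyPositive_s14] at hG

/-- For a unital positive map `E` from a C*-algebra `A` onto a C*-subalgebra `B` and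
selfadjoint `x`, the Cauchy transform `G_x(b) = E[(b - x)⁻¹]` maps the operator upper
half-plane into the operator lower half-plane: for every `b` with `Im b > 0`, `b - x` is
invertible and `-Im E[(b - x)⁻¹] > 0`. -/
theorem stmt_14 {A : Type*} [CStarAlgebra A] [PartialOrder A] [StarOrderedRing A]
    (B : StarSubalgebra ℂ A) (hBclosed : IsClosed (B : Set A))
    (E : A →ₗ[ℂ] A) (hErange : ∀ a : A, E a ∈ B)
    (hE1 : E 1 = 1) (hEpos : ∀ a : A, 0 ≤ a → 0 ≤ E a)
    (x : A) (hx : IsSelfAdjoint x) :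
    ∀ b : A, StrictlyPos (aIm b) →
      IsUnit (b - x) ∧ StrictlyPos (-(aIm (E (Ring.inverse (b - x))))) :=
  stmt_14_general E hE1 hEpos x hx
end
end
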